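/- A symmetric m×m real matrix A with nonnegative entries satisfies: there exists a substochastic matrix X with A = (X + Xᵀ)/2, if and only if A ∈ 𝐔_m, i.e., for every subset α ⊆ {1,…,m} we have ∑_{i,j∈α} a_{ij} ≤ |α|. -/

import Mathlib

open Matrix Finset

def IsInU {m : ℕ} (A : Matrix (Fin m) (Fin m) ℝ) : Prop :=
  A.IsSymm ∧ (∀ i j, 0 ≤ A i j) ∧
    ∀ α : Finset (Fin m), ∑ i ∈ α, ∑ j ∈ α, A i j ≤ (α.card : ℝ)

def IsInUtop {m : ℕ} (A : Matrix (Fin m) (Fin m) ℝ) : Prop :=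
  IsInU A ∧ ∑ i, ∑ j, A i j = (m : ℝ)

def IsExtremeIn {m : ℕ} (S : Matrix (Fin m) (Fin m) ℝ → Prop)
    (A : Matrix (Fin m) (Fin m) ℝ) : Prop :=
  S A ∧ ∀ A₁ A₂, S A₁ → S A₂ → A₁ + A₂ = (2 : ℝ) • A → A₁ = A ∧ A₂ = A

def IsRowStochastic {m : ℕ} (X : Matrix (Fin m) (Fin m) ℝ) : Prop :=
  (∀ i j, 0 ≤ X i j) ∧ ∀ i, ∑ j, X i j = 1

def IsSubstochastic {m : ℕ} (X : Matrix (Fin m) (Fin m) ℝ) : Prop :=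
  (∀ i j, 0 ≤ X i j) ∧ ∀ i, ∑ j, X i j ≤ 1

/-!
Given the subset condition, choose among the nonnegative `X` with `(X + Xᵀ) / 2 = A` (a compact
set) one minimising `∑ᵤ sᵤ²`, where `sᵤ` are the row sums. Moving mass `ε` from `X v w` to `X w v`
keeps `X` admissible and changes the potential by `2ε (s_w - s_v + ε)`, so at a minimiser
`X v w > 0` forces `s_v ≤ s_w`. Hence no mass leaves the set `S` of rows with sum `> 1`, and
`∑_{v ∈ S} s_v = ∑_{S × S} X = ∑_{S × S} A ≤ |S|`, which forces `S = ∅`.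
-/

section

variable {n : Type*}

def nonnegSplittings (A : Matrix n n ℝ) : Set (Matrix n n ℝ) :=
  {X | (∀ i j, 0 ≤ X i j) ∧ A = (1 / 2 : ℝ) • (X + Xᵀ)}

lemma half_smul_add_transpose_apply (X : Matrix n n ℝ) (i j : n) :
    ((1 / 2 : ℝ) • (X + Xᵀ)) i j = (X i j + X j i) / 2 := by
  simp only [Matrix.smul_apply, Matrix.add_apply, transpose_apply, smul_eq_mul]
  ring

lemma isCompact_nonnegSplittings (A : Matrix n n ℝ) : IsCompact (nonnegSplittings A) := by
  have hclosed : IsClosed (nonnegSplittings A) := by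
    refine IsClosed.inter ?_ (isClosed_eq continuous_const (by fun_prop))
    show IsClosed {X : Matrix n n ℝ | ∀ i j, 0 ≤ X i j}
    simp only [Set.ofPred_forall]
    exact isClosed_iInter fun i => isClosed_iInter fun j =>
      isClosed_le continuous_const (continuous_id.matrix_elem i j)
  refine (isCompact_univ_pi fun i => isCompact_univ_pi fun j =>
    isCompact_Icc (a := 0) (b := 2 * A i j)).of_isClosed_subset hclosed ?_
  rintro (X : Matrix n n ℝ) ⟨hX, hA⟩
  refine Set.mem_univ_pi.2 fun i => Set.mem_univ_pi.2 fun j => ⟨hX i j, ?_⟩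
  have hAij : A i j = (X i j + X j i) / 2 := by rw [hA, half_smul_add_transpose_apply]
  linarith [hX j i]

lemma sum_sum_half_smul_add_transpose (X : Matrix n n ℝ) (s : Finset n) :
    ∑ i ∈ s, ∑ j ∈ s, ((1 / 2 : ℝ) • (X + Xᵀ)) i j = ∑ i ∈ s, ∑ j ∈ s, X i j := by
  simp only [half_smul_add_transpose_apply, ← sum_div, sum_add_distrib]
  rw [sum_comm (f := fun i j => X j i)]
  ring

lemma add_single_sub_single_mem_nonnegSplittings [DecidableEq n] {A X : Matrix n n ℝ}
    (hX : X ∈ nonnegSplittings A) {v w : n} {ε : ℝ} (hε : 0 ≤ ε)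
    (hεX : ε ≤ X v w) : X + single w v ε - single v w ε ∈ nonnegSplittings A := by
  obtain ⟨hXnn, hA⟩ := hX
  refine ⟨fun i j => ?_, ?_⟩
  · simp only [Matrix.sub_apply, Matrix.add_apply, single_apply]
    split_ifs with h₁ h₂ h₂
    · linarith [hXnn i j]
    · linarith [hXnn i j]
    · obtain ⟨rfl, rfl⟩ := h₂
      linarith
    · linarith [hXnn i j]
  · rw [hA, transpose_sub, transpose_add, transpose_single, transpose_single]
    congr 1
    abel

variable [Fintype n]

lemma sum_sum_le_card {X : Matrix n n ℝ} (hX : ∀ i j, 0 ≤ X i j)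
    (hrow : ∀ i, ∑ j, X i j ≤ 1) (s : Finset n) : ∑ i ∈ s, ∑ j ∈ s, X i j ≤ #s :=
  calc ∑ i ∈ s, ∑ j ∈ s, X i j
      ≤ ∑ i ∈ s, ∑ j, X i j :=
        sum_le_sum fun i _ => sum_le_sum_of_subset_of_nonneg (subset_univ s) fun j _ _ => hX i j
    _ ≤ ∑ _i ∈ s, (1 : ℝ) := sum_le_sum fun i _ => hrow i
    _ = #s := by simp

lemma sum_row_le_one_of_forall_pos_imp_le {X : Matrix n n ℝ} (hX : ∀ i j, 0 ≤ X i j)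
    (hmono : ∀ i j, 0 < X i j → ∑ k, X i k ≤ ∑ k, X j k)
    (hcut : ∀ s : Finset n, ∑ i ∈ s, ∑ j ∈ s, X i j ≤ #s) (i : n) : ∑ j, X i j ≤ 1 := by
  by_contra! hi
  set S := univ.filter fun k => 1 < ∑ j, X k j
  have hrow : ∀ k ∈ S, ∑ j ∈ S, X k j = ∑ j, X k j := by
    intro k hk
    refine sum_subset (subset_univ S) fun j _ hj => ?_
    by_contra hne
    have hk' := (mem_filter.1 hk).2
    exact hj (mem_filter.2 ⟨mem_univ j,
      hk'.trans_le (hmono k j (lt_of_le_of_ne (hX k j) (Ne.symm hne)))⟩)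
  have hlt : ∑ _k ∈ S, (1 : ℝ) < ∑ k ∈ S, ∑ j, X k j :=
    sum_lt_sum_of_nonempty ⟨i, mem_filter.2 ⟨mem_univ i, hi⟩⟩ fun k hk => (mem_filter.1 hk).2
  rw [← sum_congr rfl hrow] at hlt
  simp only [sum_const, nsmul_eq_mul, mul_one] at hlt
  linarith [hcut S]

def sumSqRowSums (X : Matrix n n ℝ) : ℝ := ∑ i, (∑ j, X i j) ^ 2

lemma continuous_sumSqRowSums : Continuous (sumSqRowSums (n := n)) := by
  unfold sumSqRowSums
  fun_prop

variable [DecidableEq n]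

lemma sum_add_single_sub_single_apply (X : Matrix n n ℝ) (v w u : n) (ε : ℝ) :
    ∑ j, (X + single w v ε - single v w ε) u j
      = ∑ j, X u j + (if u = w then ε else 0) - (if u = v then ε else 0) := by
  simp [sum_add_distrib, sum_sub_distrib, single_apply, ite_and, eq_comm]

lemma sumSqRowSums_add_single_sub_single (X : Matrix n n ℝ) {v w : n} (hvw : v ≠ w) (ε : ℝ) :
    sumSqRowSums (X + single w v ε - single v w ε)
      = sumSqRowSums X + 2 * ε * (∑ j, X w j - ∑ j, X v j + ε) := by
  simp only [sumSqRowSums, sum_add_single_sub_single_apply]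
  simp only [sub_sq, add_sq, mul_ite, mul_zero, ite_pow, ne_eq, OfNat.ofNat_ne_zero,
    not_false_eq_true, zero_pow, sum_add_distrib, sum_sub_distrib, sum_ite_eq', mem_univ,
    ↓reduceIte, hvw, add_zero]
  ring

lemma sum_row_le_of_isMinOn {A X : Matrix n n ℝ} (hX : X ∈ nonnegSplittings A)
    (hmin : IsMinOn sumSqRowSums (nonnegSplittings A) X) {v w : n} (hvw : 0 < X v w) :
    ∑ j, X v j ≤ ∑ j, X w j := by
  by_contra! h
  have hne : v ≠ w := by rintro rfl; exact lt_irrefl _ h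
  set ε := min (X v w) ((∑ j, X v j - ∑ j, X w j) / 2)
  have hε : 0 < ε := lt_min hvw (by linarith)
  have hmem := add_single_sub_single_mem_nonnegSplittings hX hε.le (min_le_left _ _)
  have hgain : sumSqRowSums X ≤ _ := hmin hmem
  rw [sumSqRowSums_add_single_sub_single X hne] at hgain
  nlinarith [min_le_right (X v w) ((∑ j, X v j - ∑ j, X w j) / 2)]

end

theorem stmt_1 {m : ℕ} (A : Matrix (Fin m) (Fin m) ℝ)
    (hsymm : A.IsSymm) (hnn : ∀ i j, 0 ≤ A i j) :
    (∃ X : Matrix (Fin m) (Fin m) ℝ, IsSubstochastic X ∧ A = (1/2 : ℝ) • (X + Xᵀ)) ↔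
      IsInU A := by
  constructor
  · rintro ⟨X, ⟨hX, hrow⟩, hA⟩
    refine ⟨hsymm, hnn, fun s => ?_⟩
    rw [hA, sum_sum_half_smul_add_transpose]
    exact sum_sum_le_card hX hrow s
  · rintro ⟨-, -, hcut⟩
    have hA : A ∈ nonnegSplittings A :=
      ⟨hnn, by rw [hsymm.eq, ← two_smul ℝ A, smul_smul]; norm_num⟩
    obtain ⟨X, hX, hmin⟩ := (isCompact_nonnegSplittings A).exists_isMinOn ⟨A, hA⟩
      continuous_sumSqRowSums.continuousOn
    refine ⟨X, ⟨hX.1, sum_row_le_one_of_forall_pos_imp_le hX.1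
      (fun i j => sum_row_le_of_isMinOn hX hmin) fun s => ?_⟩, hX.2⟩
    rw [← sum_sum_half_smul_add_transpose, ← hX.2]
    exact hcut s
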